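/- arXiv:0704.3357 — 2 statements merged into one kernel-verified Lean document; each statement's English description precedes it below -/
import Mathlib

section
/- For all natural numbers m, n and every matrix M : Matrix (Fin m) (Fin n) ℂ, one has (tr(M * Mᴴ))² − tr((M * Mᴴ)²) = 2 * Σ_{a < a'} Σ_{b < b'} ‖M a b * M a' b' − M a' b * M a b'‖², where the sums run over pairs a < a' in Fin m and b < b' in Fin n. In particular, the squared generalized concurrence c²(M) is a sum of absolute squares of quadratic polynomials (the 2×2 minors) in the entries of M. -/
open Matrix Finset

/-!
Expanding both traces gives `(tr MMᴴ)² - tr (MMᴴ)² = ∑ d(a,a',b,b') * conj (M a b * M a' b')`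
over all `a a' b b'`, where `d` is the `2 × 2` minor. Since `d` is antisymmetric in `(a, a')`,
exchanging `a` and `a'` shows that twice this sum is `∑ |d|²` (Lagrange's identity). Finally
`|d|²` is symmetric in both pairs of indices and vanishes on their diagonals, so the sum over
all indices is four times the sum over `a < a'`, `b < b'`.
-/

theorem Fintype.sum_sum_eq_two_nsmul_sum_sum_lt {ι M : Type*} [Fintype ι] [LinearOrder ι]
    [AddCommMonoid M] (f : ι → ι → M) (hsymm : ∀ i j, f i j = f j i) (hdiag : ∀ i, f i i = 0) :
    ∑ i, ∑ j, f i j = 2 • ∑ i, ∑ j ∈ univ.filter (fun j => i < j), f i j := by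
  have decomp : ∀ i j, f i j = (if i < j then f i j else 0) + if j < i then f j i else 0 := by
    intro i j
    rcases lt_trichotomy i j with h | rfl | h
    · simp [h, h.not_gt]
    · simp [hdiag]
    · simp [h, h.not_gt, hsymm i j]
  calc ∑ i, ∑ j, f i j
      = ∑ i, ∑ j, (if i < j then f i j else 0) + ∑ i, ∑ j, if j < i then f j i else 0 := by
        simp only [← sum_add_distrib, ← decomp]
    _ = 2 • ∑ i, ∑ j ∈ univ.filter (fun j => i < j), f i j := by
        rw [sum_comm (f := fun i j => if j < i then f j i else 0), two_nsmul]
        simp only [sum_filter]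

namespace Matrix

variable {m n R : Type*}

def twoMinor [Mul R] [Sub R] (M : Matrix m n R) (a a' : m) (b b' : n) : R :=
  M a b * M a' b' - M a' b * M a b'

section CommRing

variable [CommRing R] (M : Matrix m n R)

theorem twoMinor_swap_rows (a a' : m) (b b' : n) :
    M.twoMinor a' a b b' = -M.twoMinor a a' b b' := by
  simp only [twoMinor]; ring

theorem twoMinor_swap_cols (a a' : m) (b b' : n) :
    M.twoMinor a a' b' b = -M.twoMinor a a' b b' := by
  simp only [twoMinor]; ring

theorem twoMinor_self_rows (a : m) (b b' : n) : M.twoMinor a a b b' = 0 := by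
  simp only [twoMinor]; ring

theorem twoMinor_self_cols (a a' : m) (b : n) : M.twoMinor a a' b b = 0 := by
  simp only [twoMinor]; ring

variable [Fintype m] [Fintype n] [StarRing R]

theorem trace_mul_conjTranspose_self :
    (M * Mᴴ).trace = ∑ a, ∑ b, M a b * star (M a b) := by
  simp [trace, mul_apply]

theorem trace_sq_mul_conjTranspose_self [DecidableEq m] :
    ((M * Mᴴ) ^ 2).trace =
      ∑ a, ∑ a', ∑ b, ∑ b', M a b * star (M a' b) * (M a' b' * star (M a b')) := by
  simp only [sq, trace, diag_apply, mul_apply, conjTranspose_apply, sum_mul_sum]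

theorem sq_trace_sub_trace_sq_mul_conjTranspose_self [DecidableEq m] :
    (M * Mᴴ).trace ^ 2 - ((M * Mᴴ) ^ 2).trace =
      ∑ a, ∑ a', ∑ b, ∑ b', M.twoMinor a a' b b' * star (M a b * M a' b') := by
  rw [trace_mul_conjTranspose_self, trace_sq_mul_conjTranspose_self, sq, sum_mul_sum,
    sum_comm (f := fun a a' => ∑ b, ∑ b', M a b * star (M a' b) * (M a' b' * star (M a b')))]
  simp only [sum_mul_sum, ← sum_sub_distrib]
  refine sum_congr rfl fun a _ => sum_congr rfl fun a' _ => sum_congr rfl fun b _ =>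
    sum_congr rfl fun b' _ => ?_
  simp only [twoMinor, star_mul']
  ring

theorem two_mul_sq_trace_sub_trace_sq_mul_conjTranspose_self [DecidableEq m] :
    2 * ((M * Mᴴ).trace ^ 2 - ((M * Mᴴ) ^ 2).trace) =
      ∑ a, ∑ a', ∑ b, ∑ b', M.twoMinor a a' b b' * star (M.twoMinor a a' b b') := by
  have swap : ∑ a, ∑ a', ∑ b, ∑ b', M.twoMinor a a' b b' * star (M a b * M a' b') =
      -∑ a, ∑ a', ∑ b, ∑ b', M.twoMinor a a' b b' * star (M a' b * M a b') := by
    rw [sum_comm]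
    simp only [← sum_neg_distrib, ← neg_mul, ← twoMinor_swap_rows]
  rw [sq_trace_sub_trace_sq_mul_conjTranspose_self, two_mul]
  nth_rw 2 [swap]
  simp only [← sub_eq_add_neg, ← sum_sub_distrib, ← mul_sub, ← star_sub]
  rfl

end CommRing

theorem sum_norm_twoMinor_sq [Fintype m] [Fintype n] [LinearOrder m] [LinearOrder n]
    [SeminormedCommRing R] (M : Matrix m n R) :
    ∑ a, ∑ a', ∑ b, ∑ b', ‖M.twoMinor a a' b b'‖ ^ 2 =
      4 * ∑ a, ∑ a' ∈ univ.filter (fun a' => a < a'),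
        ∑ b, ∑ b' ∈ univ.filter (fun b' => b < b'), ‖M.twoMinor a a' b b'‖ ^ 2 := by
  have cols : ∀ a a', ∑ b, ∑ b', ‖M.twoMinor a a' b b'‖ ^ 2 =
      2 • ∑ b, ∑ b' ∈ univ.filter (fun b' => b < b'), ‖M.twoMinor a a' b b'‖ ^ 2 :=
    fun a a' => Fintype.sum_sum_eq_two_nsmul_sum_sum_lt _
      (fun b b' => by rw [twoMinor_swap_cols, norm_neg])
      (fun b => by rw [twoMinor_self_cols, norm_zero, sq, zero_mul])
  rw [Fintype.sum_sum_eq_two_nsmul_sum_sum_lt _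
      (fun a a' => by simp only [twoMinor_swap_rows M a a', norm_neg])
      (fun a => by simp only [twoMinor_self_rows, norm_zero, sq, zero_mul, sum_const_zero])]
  simp only [cols, nsmul_eq_mul, mul_sum, Nat.cast_ofNat, ← mul_assoc]
  norm_num

end Matrix

theorem concurrence_sq_as_sum_of_minors (m n : ℕ) (M : Matrix (Fin m) (Fin n) ℂ) :
    ((M * Mᴴ).trace) ^ 2 - ((M * Mᴴ) ^ 2).trace =
      ((2 * ∑ a : Fin m, ∑ a' ∈ univ.filter (fun a' => a < a'),
          ∑ b : Fin n, ∑ b' ∈ univ.filter (fun b' => b < b'),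
            ‖M a b * M a' b' - M a' b * M a b'‖ ^ 2 : ℝ) : ℂ) := by
  have h := M.two_mul_sq_trace_sub_trace_sq_mul_conjTranspose_self
  have hnorm : ∑ a, ∑ a', ∑ b, ∑ b', M.twoMinor a a' b b' * star (M.twoMinor a a' b b') =
      ((∑ a, ∑ a', ∑ b, ∑ b', ‖M.twoMinor a a' b b'‖ ^ 2 : ℝ) : ℂ) := by
    push_cast
    simp only [Complex.star_def, Complex.mul_conj']
  rw [hnorm, M.sum_norm_twoMinor_sq] at h
  simp only [twoMinor] at h
  push_cast at h ⊢
  linear_combination h / 2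
end

section
/- Let m, n be positive natural numbers and let ρ : Matrix (Fin m × Fin n) (Fin m × Fin n) ℂ be positive semidefinite with trace 1 and rank r, and let e : Fin r → (Fin m → Fin n → ℂ) be a subnormalized eigenensemble of ρ: the e α are pairwise orthogonal nonzero (with respect to the entrywise Hermitian inner product) and ρ (a,b) (a',b') = Σ_α e α a b * conj (e α a' b') for all a, a', b, b'. Then ρ is separable if and only if there exists z : Matrix (Fin (m²*n²)) (Fin r) ℂ with zᴴ * z = 1 such that for every i : Fin (m²*n²) the matrix ψ_i : Matrix (Fin m) (Fin n) ℂ given by ψ_i a b := Σ_α z i α * e α a b satisfies (tr(ψ_i * ψ_iᴴ))² = tr((ψ_i * ψ_iᴴ)²), i.e., c²(ψ_i) = 0 for each i (equivalently, Σ_i c²(ψ_i) = 0). -/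
open Matrix Kronecker
open scoped ComplexOrder

/-- A bipartite state is separable if it is a convex combination of
projectors onto product unit vectors. -/
def IsSeparableState (m n : ℕ) (ρ : Matrix (Fin m × Fin n) (Fin m × Fin n) ℂ) : Prop :=
  ∃ (I : Type) (_ : Fintype I) (p : I → ℝ) (x : I → (Fin m → ℂ)) (y : I → (Fin n → ℂ)),
    (∀ i, 0 ≤ p i) ∧ (∑ i, p i = 1) ∧
    (∀ i, ∑ a, ‖x i a‖ ^ 2 = 1) ∧ (∀ i, ∑ b, ‖y i b‖ ^ 2 = 1) ∧
    ρ = ∑ i, (p i : ℂ) • (vecMulVec (x i) (star (x i)) ⊗ₖ vecMulVec (y i) (star (y i)))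

/-!
Three facts combine. First, `2 c²(ψ)` is the sum of `|ψ a b ψ a' b' - ψ a b' ψ a' b|²` over all
2×2 minors, so `c²(ψ) = 0` exactly when `ψ` is a product vector `g ⊗ h`. Second, two ensembles
`W` and `E` with the same density matrix (`Wᴴ W = Eᴴ E`) are related by an isometry, `W = z E`,
as soon as the rows of `E` are linearly independent. Third, by Carathéodory's theorem in the
trace-one hyperplane of the real space of Hermitian matrices, a separable state is a sum of at
most `(mn)²` product projectors, since affinely independent points of that hyperplane are
linearly independent. Padding such an ensemble with zero rows gives the isometry of the forward
direction; conversely, the isometry turns the eigenensemble into an ensemble of product vectors,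
which normalizes into a separable decomposition.
-/

namespace Matrix

theorem exists_eq_vecMulVec_of_minors_eq_zero {m n K : Type*} [Field K] (ψ : Matrix m n K)
    (h : ∀ a a' b b', ψ a b * ψ a' b' = ψ a b' * ψ a' b) :
    ∃ (g : m → K) (h : n → K), ψ = vecMulVec g h := by
  by_cases hψ : ∃ a₀ b₀, ψ a₀ b₀ ≠ 0
  · obtain ⟨a₀, b₀, h₀⟩ := hψ
    refine ⟨fun a => ψ a b₀ / ψ a₀ b₀, ψ a₀, ?_⟩
    ext a b
    rw [vecMulVec_apply, div_mul_eq_mul_div, eq_div_iff h₀, h a a₀ b b₀]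
  · push Not at hψ
    exact ⟨0, 0, by ext a b; simp [hψ]⟩

section Concurrence

variable {m n : Type*} [Fintype m] [DecidableEq m] [Fintype n]

theorem two_mul_trace_sq_sub_trace_sq {R : Type*} [CommRing R] [StarRing R] (ψ : Matrix m n R) :
    2 * ((ψ * ψᴴ).trace ^ 2 - ((ψ * ψᴴ) ^ 2).trace) =
      ∑ a, ∑ a', ∑ b, ∑ b', star (ψ a b * ψ a' b' - ψ a b' * ψ a' b) *
        (ψ a b * ψ a' b' - ψ a b' * ψ a' b) := by
  have hM : ∀ a a', (ψ * ψᴴ) a a' = ∑ b, ψ a b * star (ψ a' b) := fun _ _ => rfl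
  set T : m → m → n → n → R := fun a a' b b' =>
    ψ a b * star (ψ a b) * (ψ a' b' * star (ψ a' b'))
  set C : m → m → n → n → R := fun a a' b b' =>
    ψ a b * star (ψ a' b) * (ψ a' b' * star (ψ a b'))
  have swap : ∀ F : m → m → n → n → R,
      ∑ a, ∑ a', ∑ b, ∑ b', F a a' b' b = ∑ a, ∑ a', ∑ b, ∑ b', F a a' b b' :=
    fun F => Finset.sum_congr rfl fun _ _ => Finset.sum_congr rfl fun _ _ => Finset.sum_comm
  have hT : (ψ * ψᴴ).trace ^ 2 = ∑ a, ∑ a', ∑ b, ∑ b', T a a' b b' := by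
    simp only [trace, diag, hM, sq, Finset.sum_mul_sum, T]
  have hC : ((ψ * ψᴴ) ^ 2).trace = ∑ a, ∑ a', ∑ b, ∑ b', C a a' b b' := by
    simp only [trace, diag, sq, mul_apply (M := ψ * ψᴴ), hM, Finset.sum_mul_sum, C]
  calc 2 * ((ψ * ψᴴ).trace ^ 2 - ((ψ * ψᴴ) ^ 2).trace)
      = ∑ a, ∑ a', ∑ b, ∑ b', (T a a' b b' + T a a' b' b - C a a' b b' - C a a' b' b) := by
        simp only [Finset.sum_sub_distrib, Finset.sum_add_distrib]
        rw [swap T, swap C, hT, hC]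
        ring
    _ = _ := by
        refine Finset.sum_congr rfl fun a _ => Finset.sum_congr rfl fun a' _ =>
          Finset.sum_congr rfl fun b _ => Finset.sum_congr rfl fun b' _ => ?_
        simp only [T, C, star_sub, star_mul']
        ring

theorem trace_sq_eq_iff_exists_eq_vecMulVec {𝕜 : Type*} [RCLike 𝕜] (ψ : Matrix m n 𝕜) :
    (ψ * ψᴴ).trace ^ 2 = ((ψ * ψᴴ) ^ 2).trace ↔ ∃ (g : m → 𝕜) (h : n → 𝕜), ψ = vecMulVec g h := by
  rw [← sub_eq_zero, ← mul_eq_zero_iff_left (two_ne_zero' 𝕜), two_mul_trace_sq_sub_trace_sq]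
  simp (disch := repeat' (first | intro _ | apply Finset.sum_nonneg | apply star_mul_self_nonneg))
    only [Finset.sum_eq_zero_iff_of_nonneg, Finset.mem_univ, true_implies, mul_eq_zero,
      star_eq_zero, or_self, sub_eq_zero]
  exact ⟨exists_eq_vecMulVec_of_minors_eq_zero ψ, by
    rintro ⟨g, h, rfl⟩ a a' b b'; simp only [vecMulVec_apply]; ring⟩

end Concurrence

section Ensembles

variable {ι κ r 𝕜 : Type*} [Fintype ι] [Fintype κ] [RCLike 𝕜]

theorem mul_eq_zero_iff_of_conjTranspose_mul_self_eq {ι' ν : Type*} [Fintype ι']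
    {W : Matrix ι κ 𝕜} {E : Matrix ι' κ 𝕜} (h : Wᴴ * W = Eᴴ * E) (X : Matrix κ ν 𝕜) :
    W * X = 0 ↔ E * X = 0 := by
  have hX : (W * X)ᴴ * (W * X) = (E * X)ᴴ * (E * X) := by
    rw [conjTranspose_mul, conjTranspose_mul, Matrix.mul_assoc, ← Matrix.mul_assoc Wᴴ, h,
      Matrix.mul_assoc, Matrix.mul_assoc]
  rw [← conjTranspose_mul_self_eq_zero, hX, conjTranspose_mul_self_eq_zero]

theorem exists_isometry_mul_eq_of_conjTranspose_mul_self_eq [Fintype r] [DecidableEq r]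
    [DecidableEq κ] (W : Matrix ι κ 𝕜) (E : Matrix r κ 𝕜) (hE : IsUnit (E * Eᴴ))
    (h : Wᴴ * W = Eᴴ * E) : ∃ z : Matrix ι r 𝕜, zᴴ * z = 1 ∧ z * E = W := by
  set D := E * Eᴴ
  have hD : D * D⁻¹ = 1 := mul_nonsing_inv D ((isUnit_iff_isUnit_det D).mp hE)
  have hD' : D⁻¹ * D = 1 := nonsing_inv_mul D ((isUnit_iff_isUnit_det D).mp hE)
  have hDinv : (D⁻¹)ᴴ = D⁻¹ := by
    rw [conjTranspose_nonsing_inv, (isHermitian_mul_conjTranspose_self E).eq]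
  refine ⟨W * Eᴴ * D⁻¹, ?_, ?_⟩
  · calc (W * Eᴴ * D⁻¹)ᴴ * (W * Eᴴ * D⁻¹) = D⁻¹ * E * (Wᴴ * W) * Eᴴ * D⁻¹ := by
          simp only [conjTranspose_mul, conjTranspose_conjTranspose, hDinv, Matrix.mul_assoc]
      _ = D⁻¹ * D * (D * D⁻¹) := by simp only [h, D, Matrix.mul_assoc]
      _ = 1 := by rw [hD, hD', Matrix.one_mul]
  · -- `1 - Eᴴ D⁻¹ E` kills `E`, hence also `W`.
    have hproj : E * (1 - Eᴴ * D⁻¹ * E) = 0 := by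
      rw [Matrix.mul_sub, Matrix.mul_one, ← Matrix.mul_assoc, ← Matrix.mul_assoc, hD,
        Matrix.one_mul, sub_self]
    have hW := (mul_eq_zero_iff_of_conjTranspose_mul_self_eq h _).2 hproj
    rw [Matrix.mul_sub, Matrix.mul_one, sub_eq_zero] at hW
    simpa only [Matrix.mul_assoc] using hW.symm

theorem isUnit_mul_conjTranspose_of_pairwise_orthogonal [Fintype r] [DecidableEq r]
    (E : Matrix r κ 𝕜) (hne : ∀ α, E α ≠ 0)
    (horth : Pairwise fun α β => E α ⬝ᵥ star (E β) = 0) : IsUnit (E * Eᴴ) := by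
  have hdiag : E * Eᴴ = diagonal fun α => E α ⬝ᵥ star (E α) := by
    ext α β
    rw [diagonal_apply]
    split_ifs with hαβ
    · subst hαβ; rfl
    · exact horth hαβ
  rw [hdiag, isUnit_diagonal, Pi.isUnit_iff]
  exact fun α => isUnit_iff_ne_zero.2 (dotProduct_self_star_eq_zero.not.2 (hne α))

end Ensembles

theorem exists_conjTranspose_mul_self_eq_of_card_le {ι r R : Type*} [Fintype ι] [Fintype r]
    [Semiring R] [StarRing R] {N : ℕ} (z₀ : Matrix ι r R) (hN : Fintype.card ι ≤ N) :
    ∃ z : Matrix (Fin N) r R, zᴴ * z = z₀ᴴ * z₀ ∧ ∀ j, z j = 0 ∨ ∃ i, z j = z₀ i := by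
  classical
  obtain ⟨f⟩ := Function.Embedding.nonempty_of_card_le (hN.trans (Fintype.card_fin N).ge)
  set z : Matrix (Fin N) r R := Function.extend f z₀ 0
  have hz : ∀ i, z (f i) = z₀ i := f.injective.extend_apply z₀ 0
  have hz₀ : ∀ j, (¬∃ i, f i = j) → z j = 0 := Function.extend_apply' (f := f) z₀ 0
  refine ⟨z, ?_, fun j => ?_⟩
  · ext α β
    refine (Finset.sum_of_injOn f f.injective.injOn (fun _ _ => Finset.mem_univ _) ?_ ?_).symm
    · intro j _ hj
      simp [hz₀ j fun ⟨i, hi⟩ => hj ⟨i, by simp, hi⟩]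
    · intro i _
      simp [hz]
  · by_cases hj : ∃ i, f i = j
    · obtain ⟨i, rfl⟩ := hj
      exact Or.inr ⟨i, hz i⟩
    · exact Or.inl (hz₀ j hj)

theorem transpose_sum_vecMulVec_star {ι κ R : Type*} [Fintype ι] [CommSemiring R] [StarRing R]
    (W : Matrix ι κ R) : (∑ i, vecMulVec (W i) (star (W i)))ᵀ = Wᴴ * W := by
  ext q q'
  simp only [transpose_apply, sum_apply, vecMulVec_apply, Pi.star_apply, mul_apply,
    conjTranspose_apply, mul_comm]

theorem kronecker_vecMulVec_star {m n R : Type*} [CommSemiring R] [StarRing R] (x : m → R)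
    (y : n → R) :
    vecMulVec x (star x) ⊗ₖ vecMulVec y (star y) =
      vecMulVec (Function.uncurry (vecMulVec x y)) (star (Function.uncurry (vecMulVec x y))) := by
  ext ⟨a, b⟩ ⟨a', b'⟩
  simp only [kroneckerMap_apply, vecMulVec_apply, Function.uncurry, Pi.star_apply, star_mul']
  ring

end Matrix

theorem AffineIndependent.linearIndependent_of_forall_eq_one {k V ι : Type*} [Ring k]
    [AddCommGroup V] [Module k V] {p : ι → V} (hp : AffineIndependent k p) (ℓ : V →ₗ[k] k)
    (hℓ : ∀ i, ℓ (p i) = 1) : LinearIndependent k p :=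
  linearIndependent_iff'.2 fun s g hg =>
    hp.eq_zero_of_sum_eq_zero (by simpa [hℓ] using congrArg ℓ hg) hg

universe u in
theorem exists_linearIndependent_pos_sum_of_mem_convexHull {𝕜 : Type*} {E : Type u} [Field 𝕜]
    [LinearOrder 𝕜] [IsStrictOrderedRing 𝕜] [AddCommGroup E] [Module 𝕜 E] {s : Set E} {x : E}
    (ℓ : E →ₗ[𝕜] 𝕜) (hℓ : ∀ y ∈ s, ℓ y = 1) (hx : x ∈ convexHull 𝕜 s) :
    ∃ (ι : Type u) (_ : Fintype ι) (z : ι → E) (w : ι → 𝕜), Set.range z ⊆ s ∧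
      LinearIndependent 𝕜 z ∧ (∀ i, 0 < w i) ∧ ∑ i, w i • z i = x := by
  obtain ⟨ι, _, z, w, hzs, hz, hw, -, hx⟩ := eq_pos_convex_span_of_mem_convexHull hx
  exact ⟨ι, _, z, w, hzs, hz.linearIndependent_of_forall_eq_one ℓ fun i => hℓ _ (hzs ⟨i, rfl⟩),
    hw, hx⟩

open scoped ComplexStarModule in
theorem LinearIndependent.complex_of_isSelfAdjoint {ι A : Type*} [AddCommGroup A] [Module ℂ A]
    [StarAddMonoid A] [StarModule ℂ A] {v : ι → A} (hv : LinearIndependent ℝ v)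
    (hsa : ∀ i, IsSelfAdjoint (v i)) : LinearIndependent ℂ v := by
  rw [linearIndependent_iff'] at hv ⊢
  intro s g hg i hi
  have hre : ∑ j ∈ s, (g j).re • v j = 0 := by
    have := congrArg (fun x => (ℜ x : A)) hg
    simpa [map_sum, realPart_smul, (hsa _).coe_realPart, (hsa _).imaginaryPart] using this
  have him : ∑ j ∈ s, (g j).im • v j = 0 := by
    have := congrArg (fun x => (ℑ x : A)) hg
    simpa [map_sum, imaginaryPart_smul, (hsa _).coe_realPart, (hsa _).imaginaryPart] using this
  exact Complex.ext (hv s _ hre i hi) (hv s _ him i hi)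

theorem Matrix.card_le_of_linearIndependent_isHermitian {ι k : Type*} [Fintype ι] [Fintype k]
    {v : ι → Matrix k k ℂ} (hv : LinearIndependent ℝ v) (hv' : ∀ i, (v i).IsHermitian) :
    Fintype.card ι ≤ Fintype.card k ^ 2 := by
  have := (hv.complex_of_isSelfAdjoint hv').fintype_card_le_finrank
  rwa [Module.finrank_matrix, Module.finrank_self, mul_one, ← sq] at this

section ProductStates

variable {m n : Type*} [Fintype m] [Fintype n]

theorem star_dotProduct_self_eq_sum_norm_sq (x : m → ℂ) :
    star x ⬝ᵥ x = ((∑ a, ‖x a‖ ^ 2 : ℝ) : ℂ) := by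
  push_cast
  exact Finset.sum_congr rfl fun a _ => Complex.conj_mul' (x a)

theorem exists_unit_vecMulVec_star_eq_smul (g : m → ℂ) (hg : g ≠ 0) :
    ∃ (c : ℝ) (x : m → ℂ), 0 ≤ c ∧ ∑ a, ‖x a‖ ^ 2 = 1 ∧
      vecMulVec g (star g) = (c : ℂ) • vecMulVec x (star x) := by
  set c := ∑ a, ‖g a‖ ^ 2
  have hc : 0 < c := by
    obtain ⟨a, ha⟩ := Function.ne_iff.1 hg
    exact Finset.sum_pos' (fun _ _ => by positivity) ⟨a, Finset.mem_univ _, by positivity⟩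
  have hs : ((√c : ℝ) : ℂ) ^ 2 = c := by rw [← Complex.ofReal_pow, Real.sq_sqrt hc.le]
  have hs0 : ((√c : ℝ) : ℂ) ≠ 0 := Complex.ofReal_ne_zero.2 (Real.sqrt_pos.2 hc).ne'
  refine ⟨c, ((√c : ℝ) : ℂ)⁻¹ • g, hc.le, ?_, ?_⟩
  · simp only [Pi.smul_apply, smul_eq_mul, norm_mul, mul_pow, ← Finset.mul_sum, norm_inv,
      Complex.norm_real, Real.norm_eq_abs, abs_of_nonneg (Real.sqrt_nonneg c), inv_pow,
      Real.sq_sqrt hc.le]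
    exact inv_mul_cancel₀ hc.ne'
  · ext a a'
    simp only [vecMulVec_apply, Pi.star_apply, Pi.smul_apply, Matrix.smul_apply, smul_eq_mul,
      star_mul', star_inv₀, Complex.star_def, Complex.conj_ofReal]
    field_simp
    rw [hs]

variable (m n) in
def productStates : Set (Matrix (m × n) (m × n) ℂ) :=
  {σ | ∃ (x : m → ℂ) (y : n → ℂ), ∑ a, ‖x a‖ ^ 2 = 1 ∧ ∑ b, ‖y b‖ ^ 2 = 1 ∧
    σ = vecMulVec x (star x) ⊗ₖ vecMulVec y (star y)}

theorem trace_of_mem_productStates {σ : Matrix (m × n) (m × n) ℂ} (hσ : σ ∈ productStates m n) :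
    σ.trace = 1 := by
  obtain ⟨x, y, hx, hy, rfl⟩ := hσ
  rw [trace_kronecker, trace_vecMulVec, trace_vecMulVec, dotProduct_comm, dotProduct_comm y,
    star_dotProduct_self_eq_sum_norm_sq, star_dotProduct_self_eq_sum_norm_sq, hx, hy]
  norm_num

theorem isHermitian_of_mem_productStates {σ : Matrix (m × n) (m × n) ℂ}
    (hσ : σ ∈ productStates m n) : σ.IsHermitian := by
  obtain ⟨x, y, -, -, rfl⟩ := hσ
  rw [kronecker_vecMulVec_star]
  exact (posSemidef_vecMulVec_self_star _).isHermitian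

end ProductStates

section Separable

variable {m n : ℕ} {ρ : Matrix (Fin m × Fin n) (Fin m × Fin n) ℂ}

theorem IsSeparableState.mem_convexHull (hρ : IsSeparableState m n ρ) :
    ρ ∈ convexHull ℝ (productStates (Fin m) (Fin n)) := by
  obtain ⟨I, _, p, x, y, hp, hp1, hx, hy, rfl⟩ := hρ
  simp only [Complex.coe_smul]
  exact (convex_convexHull ℝ _).sum_mem (fun i _ => hp i) hp1
    fun i _ => subset_convexHull ℝ _ ⟨x i, y i, hx i, hy i, rfl⟩

theorem IsSeparableState.exists_sum_kronecker_card_le (hρ : IsSeparableState m n ρ) :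
    ∃ (ι : Type) (_ : Fintype ι) (x : ι → Fin m → ℂ) (y : ι → Fin n → ℂ),
      Fintype.card ι ≤ m ^ 2 * n ^ 2 ∧
      ρ = ∑ i, vecMulVec (x i) (star (x i)) ⊗ₖ vecMulVec (y i) (star (y i)) := by
  set ℓ := Complex.reLm.comp ((traceLinearMap (Fin m × Fin n) ℂ ℂ).restrictScalars ℝ)
  obtain ⟨ι, _, σ, w, hσ, hlin, hw, hsum⟩ := exists_linearIndependent_pos_sum_of_mem_convexHull ℓ
    (fun σ hσ => by simp [ℓ, trace_of_mem_productStates hσ]) hρ.mem_convexHull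
  choose x y hx hy hσxy using fun i => hσ ⟨i, rfl⟩
  refine ⟨ι, inferInstance, fun i => ((√(w i) : ℝ) : ℂ) • x i, y, ?_, ?_⟩
  · simpa [mul_pow] using card_le_of_linearIndependent_isHermitian hlin
      fun i => isHermitian_of_mem_productStates (hσ ⟨i, rfl⟩)
  · rw [← hsum]
    refine Fintype.sum_congr _ _ fun i => ?_
    have hsq : ((√(w i) : ℝ) : ℂ) * ((√(w i) : ℝ) : ℂ) = w i := by
      rw [← Complex.ofReal_mul, Real.mul_self_sqrt (hw i).le]
    rw [hσxy i, star_smul, Complex.star_def, Complex.conj_ofReal, smul_vecMulVec, vecMulVec_smul,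
      smul_smul, smul_kronecker, hsq, Complex.coe_smul]

theorem IsSeparableState.exists_isometry_mul_eq_product {r : Type*} [Fintype r] [DecidableEq r]
    (hρ : IsSeparableState m n ρ) (E : Matrix r (Fin m × Fin n) ℂ) (hE : IsUnit (E * Eᴴ))
    (hρE : ρᵀ = Eᴴ * E) :
    ∃ z : Matrix (Fin (m ^ 2 * n ^ 2)) r ℂ, zᴴ * z = 1 ∧
      ∀ j, ∃ g h, (z * E) j = Function.uncurry (vecMulVec g h) := by
  obtain ⟨ι, _, x, y, hcard, hρxy⟩ := hρ.exists_sum_kronecker_card_le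
  set W : Matrix ι (Fin m × Fin n) ℂ := fun i => Function.uncurry (vecMulVec (x i) (y i))
  have hW : Wᴴ * W = Eᴴ * E := by
    rw [← hρE, ← transpose_sum_vecMulVec_star, hρxy]
    simp only [W, kronecker_vecMulVec_star]
  obtain ⟨z₀, hz₀, hz₀E⟩ := exists_isometry_mul_eq_of_conjTranspose_mul_self_eq W E hE hW
  obtain ⟨z, hz, hrows⟩ := exists_conjTranspose_mul_self_eq_of_card_le z₀ hcard
  refine ⟨z, hz.trans hz₀, fun j => ?_⟩
  rcases hrows j with hj | ⟨i, hj⟩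
  · exact ⟨0, 0, by ext q; simp [mul_apply, hj, Function.uncurry]⟩
  · refine ⟨x i, y i, ?_⟩
    change _ = W i
    rw [← hz₀E]
    ext q
    simp only [mul_apply, hj]

theorem isSeparableState_of_sum_kronecker {ι : Type} [Fintype ι] (g : ι → Fin m → ℂ)
    (h : ι → Fin n → ℂ)
    (hρ : ρ = ∑ i, vecMulVec (g i) (star (g i)) ⊗ₖ vecMulVec (h i) (star (h i)))
    (htr : ρ.trace = 1) : IsSeparableState m n ρ := by
  classical
  set J := {i // g i ≠ 0 ∧ h i ≠ 0}
  have hterm : ∀ i : J, ∃ (p : ℝ) (x : Fin m → ℂ) (y : Fin n → ℂ), 0 ≤ p ∧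
      ∑ a, ‖x a‖ ^ 2 = 1 ∧ ∑ b, ‖y b‖ ^ 2 = 1 ∧
      vecMulVec (g i) (star (g i)) ⊗ₖ vecMulVec (h i) (star (h i)) =
        (p : ℂ) • (vecMulVec x (star x) ⊗ₖ vecMulVec y (star y)) := by
    rintro ⟨i, hg, hh⟩
    obtain ⟨c, x, hc, hx, hgx⟩ := exists_unit_vecMulVec_star_eq_smul (g i) hg
    obtain ⟨d, y, hd, hy, hhy⟩ := exists_unit_vecMulVec_star_eq_smul (h i) hh
    refine ⟨c * d, x, y, mul_nonneg hc hd, hx, hy, ?_⟩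
    rw [hgx, hhy, smul_kronecker, kronecker_smul, smul_smul, Complex.ofReal_mul, mul_comm]
  choose p x y hp hx hy hQ using hterm
  have hρJ :
      ρ = ∑ j, (p j : ℂ) • (vecMulVec (x j) (star (x j)) ⊗ₖ vecMulVec (y j) (star (y j))) := by
    rw [hρ, ← Fintype.sum_subtype_add_sum_subtype (fun i => g i ≠ 0 ∧ h i ≠ 0),
      Finset.sum_eq_zero (s := Finset.univ) (f := fun i : {i // ¬(g i ≠ 0 ∧ h i ≠ 0)} => _),
      add_zero]
    · exact Fintype.sum_congr _ _ hQ
    · rintro ⟨i, hi⟩ -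
      rcases not_and_or.1 hi with hg | hh
      · simp [not_not.1 hg]
      · simp [not_not.1 hh]
  refine ⟨J, inferInstance, p, x, y, hp, ?_, hx, hy, hρJ⟩
  rw [hρJ, trace_sum] at htr
  simp only [trace_smul, trace_of_mem_productStates ⟨_, _, hx _, hy _, rfl⟩, smul_eq_mul,
    mul_one] at htr
  exact_mod_cast htr

end Separable

theorem separable_iff_stiefel_zero_concurrence_general (m n r : ℕ)
    (ρ : Matrix (Fin m × Fin n) (Fin m × Fin n) ℂ)
    (hρtr : ρ.trace = 1)
    (e : Fin r → (Fin m → Fin n → ℂ))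
    (he_ne : ∀ α, e α ≠ 0)
    (he_orth : ∀ α β, α ≠ β →
      ∑ a : Fin m, ∑ b : Fin n, e α a b * (starRingEnd ℂ) (e β a b) = 0)
    (he : ∀ (a a' : Fin m) (b b' : Fin n),
      ρ (a, b) (a', b') = ∑ α : Fin r, e α a b * (starRingEnd ℂ) (e α a' b')) :
    IsSeparableState m n ρ ↔
      ∃ z : Matrix (Fin (m ^ 2 * n ^ 2)) (Fin r) ℂ, zᴴ * z = 1 ∧
        ∀ i : Fin (m ^ 2 * n ^ 2),
          letI ψ : Matrix (Fin m) (Fin n) ℂ := fun a b => ∑ α : Fin r, z i α * e α a b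
          ((ψ * ψᴴ).trace) ^ 2 = ((ψ * ψᴴ) ^ 2).trace := by
  set E : Matrix (Fin r) (Fin m × Fin n) ℂ := fun α => Function.uncurry (e α)
  have hρE : ρᵀ = Eᴴ * E := by
    rw [← transpose_sum_vecMulVec_star]
    ext ⟨a, b⟩ ⟨a', b'⟩
    simp [he, Matrix.sum_apply, vecMulVec_apply, E]
  have hE : IsUnit (E * Eᴴ) := isUnit_mul_conjTranspose_of_pairwise_orthogonal E
    (fun α hα => he_ne α (funext₂ fun a b => congrFun hα (a, b)))
    (fun α β hαβ => by simpa [dotProduct, Fintype.sum_prod_type, E] using he_orth α β hαβ)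
  constructor
  · intro hsep
    obtain ⟨z, hz, hprod⟩ := hsep.exists_isometry_mul_eq_product E hE hρE
    refine ⟨z, hz, fun j => (trace_sq_eq_iff_exists_eq_vecMulVec _).2 ?_⟩
    obtain ⟨g, h, hgh⟩ := hprod j
    exact ⟨g, h, funext₂ fun a b => congrFun hgh (a, b)⟩
  · rintro ⟨z, hz, hconc⟩
    choose g h hgh using fun i => (trace_sq_eq_iff_exists_eq_vecMulVec _).1 (hconc i)
    have hW : ∀ i, (z * E) i = Function.uncurry (vecMulVec (g i) (h i)) :=
      fun i => congrArg Function.uncurry (hgh i)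
    refine isSeparableState_of_sum_kronecker g h ?_ hρtr
    simp only [kronecker_vecMulVec_star, ← hW]
    rw [← transpose_inj, transpose_sum_vecMulVec_star, hρE, conjTranspose_mul, Matrix.mul_assoc,
      ← Matrix.mul_assoc zᴴ, hz, Matrix.one_mul]

theorem separable_iff_stiefel_zero_concurrence (m n r : ℕ) (hm : 0 < m) (hn : 0 < n)
    (ρ : Matrix (Fin m × Fin n) (Fin m × Fin n) ℂ)
    (hρpsd : ρ.PosSemidef) (hρtr : ρ.trace = 1) (hρrank : ρ.rank = r)
    (e : Fin r → (Fin m → Fin n → ℂ))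
    (he_ne : ∀ α, e α ≠ 0)
    (he_orth : ∀ α β, α ≠ β →
      ∑ a : Fin m, ∑ b : Fin n, e α a b * (starRingEnd ℂ) (e β a b) = 0)
    (he : ∀ (a a' : Fin m) (b b' : Fin n),
      ρ (a, b) (a', b') = ∑ α : Fin r, e α a b * (starRingEnd ℂ) (e α a' b')) :
    IsSeparableState m n ρ ↔
      ∃ z : Matrix (Fin (m ^ 2 * n ^ 2)) (Fin r) ℂ, zᴴ * z = 1 ∧
        ∀ i : Fin (m ^ 2 * n ^ 2),
          letI ψ : Matrix (Fin m) (Fin n) ℂ := fun a b => ∑ α : Fin r, z i α * e α a b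
          ((ψ * ψᴴ).trace) ^ 2 = ((ψ * ψᴴ) ^ 2).trace :=
  separable_iff_stiefel_zero_concurrence_general m n r ρ hρtr e he_ne he_orth he
end
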